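/- arXiv:1101.4176 — 2 statements merged into one kernel-verified Lean document; each statement's English description precedes it below -/
import Mathlib

section
/- Let {Ω_i}_{i∈ℕ} be a countable system of sets in ℝⁿ and suppose there is a (possibly infinite) index subset J ⊆ ℕ such that each Ω_i for i ∈ J is the complement of an open convex subset of ℝⁿ, and there is a point x̄ with x̄ ∈ (∩_{i∈J} bd Ω_i) ∩ int(∩_{i∉J} Ω_i). Then the system {Ω_i}_{i∈ℕ} has the CHIP at x̄, i.e., T(x̄; ∩_{i=1}^∞ Ω_i) = ∩_{i=1}^∞ T(x̄;Ω_i). -/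
open Filter Topology Set Metric

section Defs
variable {E : Type*} [NormedAddCommGroup E] [NormedSpace ℝ E]

/-- Bouligand–Severi contingent tangent cone. -/
def tcone (Ω : Set E) (x : E) : Set E :=
  {v | ∃ (t : ℕ → ℝ) (w : ℕ → E), (∀ k, 0 < t k) ∧
    Tendsto t atTop (nhds 0) ∧ Tendsto w atTop (nhds v) ∧ ∀ k, x + t k • w k ∈ Ω}
end Defs

section Defs2
variable {E F : Type*} [NormedAddCommGroup E] [InnerProductSpace ℝ E]
  [NormedAddCommGroup F] [InnerProductSpace ℝ F]

/-- Fréchet (regular/pre-) normal cone. -/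
def fnormal (Ω : Set E) (x : E) : Set E :=
  {v | ∀ ε > 0, ∃ δ > 0, ∀ u ∈ Ω, ‖u - x‖ < δ → (inner ℝ v (u - x) : ℝ) ≤ ε * ‖u - x‖}

/-- Limiting (Mordukhovich) normal cone. -/
def lnormal (Ω : Set E) (x : E) : Set E :=
  {v | ∃ xk vk : ℕ → E, (∀ k, xk k ∈ Ω) ∧ (∀ k, vk k ∈ fnormal Ω (xk k)) ∧
    Tendsto xk atTop (nhds x) ∧ Tendsto vk atTop (nhds v)}

/-- Normal cone of convex analysis. -/
def cnormal (Ω : Set E) (x : E) : Set E :=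
  {v | ∀ y ∈ Ω, (inner ℝ v (y - x) : ℝ) ≤ 0}

/-- All finite sums `∑_{i ∈ I} xᵢ` with `xᵢ ∈ Nc i`. -/
def finSums (Nc : ℕ → Set E) : Set E :=
  {v | ∃ (I : Finset ℕ) (xs : ℕ → E), (∀ i ∈ I, xs i ∈ Nc i) ∧ v = ∑ i ∈ I, xs i}

/-- Fréchet normal cone in a product of inner product spaces
(equivalently, w.r.t. the Euclidean product structure). -/
def fnormalP (Ω : Set (E × F)) (z : E × F) : Set (E × F) :=
  {v | ∀ ε > 0, ∃ δ > 0, ∀ u ∈ Ω, ‖u - z‖ < δ →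
    (inner ℝ v.1 (u.1 - z.1) : ℝ) + (inner ℝ v.2 (u.2 - z.2) : ℝ) ≤ ε * ‖u - z‖}

/-- Limiting normal cone in a product of inner product spaces. -/
def lnormalP (Ω : Set (E × F)) (z : E × F) : Set (E × F) :=
  {v | ∃ zk vk : ℕ → E × F, (∀ k, zk k ∈ Ω) ∧ (∀ k, vk k ∈ fnormalP Ω (zk k)) ∧
    Tendsto zk atTop (nhds z) ∧ Tendsto vk atTop (nhds v)}

/-- Epigraph of an extended-real-valued function. -/
def epiSet (φ : E → EReal) : Set (E × ℝ) := {p | φ p.1 ≤ (p.2 : EReal)}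

/-- Basic (limiting, Mordukhovich) subdifferential. -/
noncomputable def bsub (φ : E → EReal) (x : E) : Set E :=
  {v | (v, (-1 : ℝ)) ∈ lnormalP (epiSet φ) (x, (φ x).toReal)}

/-- Singular subdifferential. -/
noncomputable def ssub (φ : E → EReal) (x : E) : Set E :=
  {v | (v, (0 : ℝ)) ∈ lnormalP (epiSet φ) (x, (φ x).toReal)}

/-- Fréchet subdifferential. -/
def fsub (φ : E → EReal) (x : E) : Set E :=
  {v | ∀ ε > 0, ∃ δ > 0, ∀ u, ‖u - x‖ < δ →
    φ x + (((inner ℝ v (u - x) : ℝ) - ε * ‖u - x‖ : ℝ) : EReal) ≤ φ u}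

/-- Fréchet upper subdifferential `∂̂⁺φ(x) = −∂̂(−φ)(x)`. -/
def fsubUpper (φ : E → EReal) (x : E) : Set E := {v | -v ∈ fsub (fun u => -(φ u)) x}
end Defs2

/-!
Tangent directions to the complement of an open convex set `U` at a point of `closure U` are
rigid: if `x + t • v ∈ U` for one `t > 0`, then, by convexity, every `x + s • w` with `s` small
and `w` near `v` lies in `U` as well, so `v` cannot be tangent to `Uᶜ`. Hence a common tangent
direction `v` of the sets `Ω i`, `i ∈ J`, keeps the whole open ray `x̄ + t • v` inside them, while
for small `t` the ray also stays in the neighbourhood `⋂ i ∉ J, Ω i` of `x̄`.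
-/

section TangentCone

variable {E : Type*} [NormedAddCommGroup E] [NormedSpace ℝ E]

lemma tcone_mono {S T : Set E} (h : S ⊆ T) (x : E) : tcone S x ⊆ tcone T x := by
  rintro v ⟨t, w, ht, ht0, hwv, hmem⟩
  exact ⟨t, w, ht, ht0, hwv, fun k => h (hmem k)⟩

lemma mem_tcone_of_eventually_mem {Ω : Set E} {x v : E}
    (h : ∀ᶠ t in 𝓝[>] (0 : ℝ), x + t • v ∈ Ω) : v ∈ tcone Ω x := by
  obtain ⟨ε, hε, hsub⟩ := mem_nhdsGT_iff_exists_Ioo_subset.1 h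
  obtain ⟨t, -, ht, ht0⟩ := exists_seq_strictAnti_tendsto' (mem_Ioi.1 hε)
  exact ⟨t, fun _ => v, fun k => (ht k).1, ht0, tendsto_const_nhds, fun k => hsub (ht k)⟩

lemma Convex.add_smul_notMem_of_mem_tcone_compl {U : Set E} (hUo : IsOpen U)
    (hUc : Convex ℝ U) {x v : E} (hx : x ∈ closure U) (hv : v ∈ tcone Uᶜ x) {t : ℝ}
    (ht : 0 < t) : x + t • v ∉ U := by
  intro hxv
  obtain ⟨s, w, hs, hs0, hwv, hsw⟩ := hv
  have hwU : ∀ᶠ k in atTop, x + t • w k ∈ U :=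
    hwv.eventually ((hUo.preimage (by fun_prop : Continuous fun y : E => x + t • y)).mem_nhds hxv)
  obtain ⟨k, hkU, hkt⟩ := (hwU.and (hs0.eventually (eventually_lt_nhds ht))).exists
  have hmem : x + (s k / t) • (t • w k) ∈ interior U :=
    hUc.add_smul_mem_interior' hx (hUo.interior_eq.symm ▸ hkU)
      ⟨div_pos (hs k) ht, (div_le_one ht).2 hkt.le⟩
  rw [smul_smul, div_mul_cancel₀ _ ht.ne', hUo.interior_eq] at hmem
  exact hsw k hmem

end TangentCone

/-- **CHIP for countable intersections of invex-type sets** (Proposition 3.9). -/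
theorem CHIP_invex_type {n : ℕ}
    (Ω : ℕ → Set (EuclideanSpace ℝ (Fin n))) (J : Set ℕ)
    (hinv : ∀ i ∈ J, ∃ U : Set (EuclideanSpace ℝ (Fin n)),
      IsOpen U ∧ Convex ℝ U ∧ Ω i = Uᶜ)
    (xb : EuclideanSpace ℝ (Fin n))
    (hbd : ∀ i ∈ J, xb ∈ frontier (Ω i))
    (hint : xb ∈ interior (⋂ i ∈ Jᶜ, Ω i)) :
    tcone (⋂ i, Ω i) xb = ⋂ i, tcone (Ω i) xb := by
  refine Subset.antisymm (subset_iInter fun i => tcone_mono (iInter_subset Ω i) xb) ?_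
  intro v hv
  rw [mem_iInter] at hv
  have hray : Tendsto (fun t : ℝ => xb + t • v) (𝓝[>] 0) (𝓝 xb) :=
    tendsto_nhdsWithin_of_tendsto_nhds <|
      (by fun_prop : Continuous fun t : ℝ => xb + t • v).tendsto' 0 xb (by simp)
  apply mem_tcone_of_eventually_mem
  filter_upwards [hray.eventually_mem (mem_interior_iff_mem_nhds.1 hint), self_mem_nhdsWithin]
    with t hnotJ ht
  refine mem_iInter.2 fun i => ?_
  by_cases hi : i ∈ J
  · obtain ⟨U, hUo, hUc, hΩ⟩ := hinv i hi
    have hxU : xb ∈ closure U := by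
      have := hbd i hi
      rw [hΩ, frontier_compl] at this
      exact frontier_subset_closure this
    have hvU : v ∈ tcone Uᶜ xb := hΩ ▸ hv i
    rw [hΩ]
    exact hUc.add_smul_notMem_of_mem_tcone_compl hUo hxU hvU ht
  · exact mem_iInter₂.1 hnotJ i hi
end

section
/- Let {Ω_i}_{i∈ℕ} be a countable system of closed sets in ℝⁿ and x̄ ∈ Ω := ∩_{i=1}^∞ Ω_i. Assume the system has the CHIP at x̄ (T(x̄;Ω) = ∩_{i=1}^∞ T(x̄;Ω_i)) and satisfies the NQC at x̄ (whenever x*_i ∈ N(x̄;Ω_i) for all i and Σ_{i=1}^∞ x*_i converges to 0, then all x*_i = 0). Then N̂(x̄;Ω) ⊆ cl{Σ_{i∈I} x*_i | x*_i ∈ N(x̄;Ω_i), I a finite subset of ℕ}. If in addition the set {Σ_{i∈I} x*_i | x*_i ∈ N(x̄;Ω_i), I a finite subset of ℕ} is closed in ℝⁿ (the NCC), then the closure operation can be omitted. -/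
open Filter Topology Set Metric

/-!
By the CHIP, a Fréchet normal `v` to `⋂ Ωᵢ` at `x̄` lies in the polar of `⋂ Λᵢ`, where
`Λᵢ = T(x̄; Ωᵢ)`. A minimizer `xₘ` of `‖x‖² / 2 - ⟪v, x⟫ + m ∑_{i<m} d(x, Λᵢ)²` satisfies
`v - xₘ = ∑_{i<m} 2m (xₘ - yᵢ)` with `yᵢ` a nearest point of `Λᵢ`, a finite sum of proximal normals
to the cones; as `m → ∞` the cluster points of `xₘ` lie in `⋂ Λᵢ` and have `‖x‖² / 2 ≤ ⟪v, x⟫ ≤ 0`,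
so `xₘ → 0` along a subsequence and `v` is a limit of such sums. Finally, a Fréchet normal to
`T(x̄; Ω)` at any of its points is a limiting normal to `Ω` at `x̄`, because at small scales `τ`
the set `Ω` looks like `x̄ + τ T(x̄; Ω)`, and projecting onto `Ω` turns approximate normals into
nearby Fréchet normals.
-/

open scoped RealInnerProductSpace

section TangentCone
variable {E : Type*} [NormedAddCommGroup E] [NormedSpace ℝ E] {Ω : Set E} {x : E}

theorem mem_tcone_iff_forall_exists {v : E} :
    v ∈ tcone Ω x ↔ ∀ ε > 0, ∃ t ∈ Ioo 0 ε, ∃ w, ‖w - v‖ < ε ∧ x + t • w ∈ Ω := by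
  constructor
  · rintro ⟨t, w, htpos, ht, hw, hmem⟩ ε hε
    obtain ⟨k, hkt, hkw⟩ := ((ht.eventually_lt_const hε).and
      ((tendsto_iff_norm_sub_tendsto_zero.1 hw).eventually_lt_const hε)).exists
    exact ⟨t k, ⟨htpos k, hkt⟩, w k, hkw, hmem k⟩
  · intro h
    choose t ht w hw hmem using fun k : ℕ => h (1 / ((k : ℝ) + 1)) Nat.one_div_pos_of_nat
    have h0 := tendsto_one_div_add_atTop_nhds_zero_nat (𝕜 := ℝ)
    refine ⟨t, w, fun k => (ht k).1, ?_, ?_, hmem⟩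
    · exact squeeze_zero (fun k => (ht k).1.le) (fun k => (ht k).2.le) h0
    · rw [tendsto_iff_norm_sub_tendsto_zero]
      exact squeeze_zero (fun _ => norm_nonneg _) (fun k => (hw k).le) h0

theorem zero_mem_tcone (hx : x ∈ Ω) : (0 : E) ∈ tcone Ω x :=
  mem_tcone_iff_forall_exists.2 fun ε hε =>
    ⟨ε / 2, ⟨half_pos hε, half_lt_self hε⟩, 0, by simpa using hε, by simpa using hx⟩

theorem isClosed_tcone : IsClosed (tcone Ω x) := by
  refine isClosed_of_closure_subset fun v hv => mem_tcone_iff_forall_exists.2 fun ε hε => ?_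
  obtain ⟨v', hv', hvv'⟩ := Metric.mem_closure_iff.1 hv (ε / 2) (half_pos hε)
  obtain ⟨t, ht, w, hw, hmem⟩ := mem_tcone_iff_forall_exists.1 hv' (ε / 2) (half_pos hε)
  refine ⟨t, ⟨ht.1, ht.2.trans (half_lt_self hε)⟩, w, ?_, hmem⟩
  calc ‖w - v‖ ≤ ‖w - v'‖ + ‖v' - v‖ := norm_sub_le_norm_sub_add_norm_sub _ _ _
    _ < ε / 2 + ε / 2 := by rw [← dist_eq_norm v', dist_comm]; gcongr
    _ = ε := add_halves ε

theorem eventually_exists_mem_tcone_near [ProperSpace E] {t : ℕ → ℝ} (htpos : ∀ k, 0 < t k)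
    (ht : Tendsto t atTop (𝓝 0)) (R : ℝ) {ρ : ℝ} (hρ : 0 < ρ) :
    ∀ᶠ k in atTop, ∀ w : E, ‖w‖ ≤ R → x + t k • w ∈ Ω → ∃ p ∈ tcone Ω x, ‖w - p‖ < ρ := by
  by_contra hc
  simp only [not_eventually, not_forall, not_exists, not_and, not_lt] at hc
  obtain ⟨φ, hφ, hbad⟩ := extraction_of_frequently_atTop hc
  choose w hwR hmem hfar using hbad
  obtain ⟨p, -, ψ, hψ, hlim⟩ := tendsto_subseq_of_bounded (isBounded_closedBall (x := (0 : E)))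
    fun j => mem_closedBall_zero_iff.2 (hwR j)
  have hp : p ∈ tcone Ω x :=
    ⟨t ∘ φ ∘ ψ, w ∘ ψ, fun j => htpos _, ht.comp (hφ.comp hψ).tendsto_atTop, hlim,
      fun j => hmem (ψ j)⟩
  obtain ⟨j, hj⟩ := (hlim.eventually (ball_mem_nhds p hρ)).exists
  exact (hfar (ψ j) p hp).not_gt (by rwa [dist_eq_norm] at hj)

end TangentCone

theorem finSums_mono {E : Type*} [NormedAddCommGroup E] {N N' : ℕ → Set E}
    (h : ∀ i, N i ⊆ N' i) : finSums N ⊆ finSums N' :=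
  fun _ ⟨I, xs, hxs, hv⟩ => ⟨I, xs, fun i hi => h i (hxs i hi), hv⟩

section Normals
variable {H : Type*} [NormedAddCommGroup H] [InnerProductSpace ℝ H]

theorem inner_nonpos_of_mem_fnormal_of_mem_tcone {Ω : Set H} {x v w : H}
    (hv : v ∈ fnormal Ω x) (hw : w ∈ tcone Ω x) : ⟪v, w⟫ ≤ 0 := by
  obtain ⟨t, wk, htpos, ht, hwk, hmem⟩ := hw
  have hle : ∀ ε > 0, ⟪v, w⟫ ≤ ε * ‖w‖ := by
    intro ε hε
    obtain ⟨δ, hδ, hball⟩ := hv ε hε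
    have hsmall : ∀ᶠ k in atTop, ‖t k • wk k‖ < δ := by
      have := (ht.smul hwk).norm
      rw [zero_smul, norm_zero] at this
      exact this.eventually_lt_const hδ
    refine le_of_tendsto_of_tendsto (tendsto_const_nhds.inner hwk) (hwk.norm.const_mul ε)
      (hsmall.mono fun k hk => ?_)
    have := hball _ (hmem k) (by rwa [add_sub_cancel_left])
    rw [add_sub_cancel_left, real_inner_smul_right, norm_smul, Real.norm_of_nonneg (htpos k).le,
      mul_left_comm] at this
    exact le_of_mul_le_mul_left this (htpos k)
  have hlim : Tendsto (fun ε : ℝ => ε * ‖w‖) (𝓝[>] 0) (𝓝 0) := by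
    simpa using (tendsto_nhdsWithin_of_tendsto_nhds (tendsto_id (x := 𝓝 (0 : ℝ)))).mul_const ‖w‖
  exact ge_of_tendsto hlim (eventually_nhdsWithin_of_forall hle)

theorem smul_mem_fnormal {Ω : Set H} {x v : H} {c : ℝ} (hc : 0 ≤ c) (hv : v ∈ fnormal Ω x) :
    c • v ∈ fnormal Ω x := by
  intro ε hε
  obtain ⟨δ, hδ, hball⟩ := hv (ε / (c + 1)) (by positivity)
  refine ⟨δ, hδ, fun u hu hd => ?_⟩
  have hcε : c * (ε / (c + 1)) ≤ ε := by
    rw [mul_div_assoc', div_le_iff₀ (by positivity)]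
    nlinarith
  rw [real_inner_smul_left]
  calc c * ⟪v, u - x⟫ ≤ c * (ε / (c + 1) * ‖u - x‖) := mul_le_mul_of_nonneg_left (hball u hu hd) hc
    _ = c * (ε / (c + 1)) * ‖u - x‖ := (mul_assoc _ _ _).symm
    _ ≤ ε * ‖u - x‖ := mul_le_mul_of_nonneg_right hcε (norm_nonneg _)

theorem sub_mem_fnormal_of_locally_nearest {Ω : Set H} {y z : H} {δ : ℝ} (hδ : 0 < δ)
    (hmin : ∀ u ∈ Ω, ‖u - y‖ < δ → dist z y ≤ dist z u) : z - y ∈ fnormal Ω y := by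
  intro ε hε
  refine ⟨min (2 * ε) δ, lt_min (by positivity) hδ, fun u hu hd => ?_⟩
  have hsq : ‖z - y‖ ^ 2 ≤ ‖(z - y) - (u - y)‖ ^ 2 := by
    rw [sub_sub_sub_cancel_right, ← dist_eq_norm, ← dist_eq_norm]
    exact pow_le_pow_left₀ dist_nonneg (hmin u hu (hd.trans_le (min_le_right _ _))) 2
  rw [norm_sub_sq_real (z - y) (u - y)] at hsq
  have h2ε := hd.trans_le (min_le_left _ _)
  nlinarith [norm_nonneg (u - y)]

theorem mem_lnormal_of_forall_exists {Ω : Set H} {x u : H}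
    (h : ∀ ε > 0, ∃ x' ∈ Ω, ∃ u' ∈ fnormal Ω x', ‖x' - x‖ ≤ ε ∧ ‖u' - u‖ ≤ ε) :
    u ∈ lnormal Ω x := by
  choose xk hxk uk huk hb using fun k : ℕ => h (1 / ((k : ℝ) + 1)) Nat.one_div_pos_of_nat
  have h0 := tendsto_one_div_add_atTop_nhds_zero_nat (𝕜 := ℝ)
  refine ⟨xk, uk, hxk, huk, ?_, ?_⟩ <;> rw [tendsto_iff_norm_sub_tendsto_zero]
  · exact squeeze_zero (fun _ => norm_nonneg _) (fun k => (hb k).1) h0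
  · exact squeeze_zero (fun _ => norm_nonneg _) (fun k => (hb k).2) h0

end Normals

section NormalsToTangentCone
variable {H : Type*} [NormedAddCommGroup H] [InnerProductSpace ℝ H] [ProperSpace H] {Ω : Set H}

/-- `q` is a nearest point to `X + s • u` in `Ω ∩ closedBall X ρ`, and
`u' = s⁻¹ • (X + s • u - q)`. -/
theorem exists_fnormal_near_of_approx_normal (hΩ : IsClosed Ω) {X u : H} (hX : X ∈ Ω)
    {ε s ρ β : ℝ} (hε : 0 < ε) (hs : 0 < s) (hsρ : s * ε < ρ) (hβ : 8 * β ≤ s * ε ^ 2)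
    (happrox : ∀ z ∈ Ω, ‖z - X‖ ≤ ρ → ⟪u, z - X⟫ ≤ ε / 4 * ‖z - X‖ + β) :
    ∃ q ∈ Ω, ‖q - X‖ ≤ s * ε ∧ ∃ u' ∈ fnormal Ω q, ‖u' - u‖ ≤ ε := by
  have hXK : X ∈ Ω ∩ closedBall X ρ := ⟨hX, mem_closedBall_self (by nlinarith)⟩
  obtain ⟨q, ⟨hqΩ, hqX⟩, hqmin⟩ := ((isCompact_closedBall X ρ).inter_left hΩ).exists_isMinOn
    ⟨X, hXK⟩ ((continuous_const (y := X + s • u)).dist continuous_id).continuousOn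
  rw [mem_closedBall, dist_eq_norm] at hqX
  have hclose : ‖q - X‖ ≤ s * ε := by
    have hsq : ‖s • u - (q - X)‖ ^ 2 ≤ ‖s • u‖ ^ 2 := by
      have hmin : dist (X + s • u) q ≤ dist (X + s • u) X := hqmin hXK
      rw [dist_eq_norm, dist_eq_norm, add_sub_cancel_left,
        show X + s • u - q = s • u - (q - X) by abel] at hmin
      exact pow_le_pow_left₀ (norm_nonneg _) hmin 2
    rw [norm_sub_sq_real, real_inner_smul_left] at hsq
    have hq := happrox q hqΩ hqX
    by_contra! hfar
    nlinarith [mul_lt_mul_of_pos_left hfar (by positivity : 0 < s * ε)]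
  have hnormal : (X + s • u) - q ∈ fnormal Ω q := by
    refine sub_mem_fnormal_of_locally_nearest (δ := ρ - s * ε) (by linarith) fun z hz hzq => ?_
    have hzX : ‖z - X‖ ≤ ρ := by
      linarith [norm_sub_le_norm_sub_add_norm_sub z q X]
    exact hqmin (⟨hz, by rwa [mem_closedBall, dist_eq_norm]⟩ : z ∈ Ω ∩ closedBall X ρ)
  refine ⟨q, hqΩ, hclose, s⁻¹ • ((X + s • u) - q), smul_mem_fnormal (by positivity) hnormal, ?_⟩
  rw [show s⁻¹ • ((X + s • u) - q) - u = s⁻¹ • (X - q) by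
    rw [add_sub_right_comm, smul_add, inv_smul_smul₀ hs.ne', add_sub_cancel_right],
    norm_smul, norm_inv, Real.norm_of_nonneg hs.le, norm_sub_rev, inv_mul_le_iff₀ hs]
  linarith

/-- At small scales `τ`, `Ω` near `X = x + τ • w` with `w` close to `y` looks like
`x + τ • tcone Ω x` near `x + τ • y`. -/
theorem exists_approx_normal_of_mem_fnormal_tcone {x y u : H} (hy : y ∈ tcone Ω x)
    (hu : u ∈ fnormal (tcone Ω x) y) {α : ℝ} (hα : 0 < α) :
    ∃ r > 0, ∀ γ > 0, ∀ η > 0, ∃ τ ∈ Ioo 0 η, ∃ X ∈ Ω, ‖X - x‖ ≤ τ * (‖y‖ + 1) ∧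
      ∀ z ∈ Ω, ‖z - X‖ ≤ r * τ → ⟪u, z - X⟫ ≤ α * ‖z - X‖ + γ * τ := by
  obtain ⟨δ, hδ, hT⟩ := hu α hα
  refine ⟨δ / 2, half_pos hδ, fun γ hγ η hη => ?_⟩
  set C := 2 * α + 2 * ‖u‖ + 1
  set γ' := min (min (δ / 8) 1) (γ / C)
  have hγ' : 0 < γ' := lt_min (lt_min (by positivity) one_pos) (by positivity)
  have hγ'δ : γ' ≤ δ / 8 := (min_le_left _ _).trans (min_le_left _ _)
  have hγ'1 : γ' ≤ 1 := (min_le_left _ _).trans (min_le_right _ _)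
  have hγ'γ : γ' * C ≤ γ := (le_div_iff₀ (by positivity)).1 (min_le_right _ _)
  obtain ⟨t, w, htpos, ht, hw, hmem⟩ := hy
  obtain ⟨k, hkη, hkw, hknear⟩ := ((ht.eventually_lt_const hη).and
    (((tendsto_iff_norm_sub_tendsto_zero.1 hw).eventually_lt_const hγ').and
      (eventually_exists_mem_tcone_near (Ω := Ω) (x := x) htpos ht (‖y‖ + δ / 2 + 1) hγ'))).exists
  have hwk : ‖w k‖ ≤ ‖y‖ + 1 := by linarith [norm_le_norm_add_norm_sub' (w k) y]
  refine ⟨t k, ⟨htpos k, hkη⟩, x + t k • w k, hmem k, ?_, fun z hz hzX => ?_⟩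
  · rw [add_sub_cancel_left, norm_smul, Real.norm_of_nonneg (htpos k).le]
    exact mul_le_mul_of_nonneg_left hwk (htpos k).le
  set w' := (t k)⁻¹ • (z - x)
  have hzX' : z - (x + t k • w k) = t k • (w' - w k) := by
    rw [smul_sub, smul_inv_smul₀ (htpos k).ne']; abel
  rw [hzX', norm_smul, Real.norm_of_nonneg (htpos k).le, mul_comm (δ / 2)] at hzX
  have hw'w : ‖w' - w k‖ ≤ δ / 2 := le_of_mul_le_mul_left hzX (htpos k)
  obtain ⟨p, hp, hw'p⟩ := hknear w'
    (by linarith [norm_le_norm_add_norm_sub' w' (w k)])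
    (by rwa [smul_inv_smul₀ (htpos k).ne', add_sub_cancel])
  have hpy : ‖p - y‖ ≤ ‖w' - w k‖ + 2 * γ' := by
    have h1 := norm_sub_le_norm_sub_add_norm_sub p w' y
    have h2 := norm_sub_le_norm_sub_add_norm_sub w' (w k) y
    rw [norm_sub_rev p w'] at h1
    linarith
  have hpu := hT p hp (by linarith)
  have hsplit : ⟪u, w' - w k⟫ = ⟪u, p - y⟫ + ⟪u, w' - p⟫ + ⟪u, y - w k⟫ := by
    rw [← inner_add_right, ← inner_add_right]; congr 1; abel
  have hrescaled : ⟪u, w' - w k⟫ ≤ α * ‖w' - w k‖ + γ := by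
    have h1 := real_inner_le_norm u (w' - p)
    have h2 := real_inner_le_norm u (y - w k)
    rw [norm_sub_rev y] at h2
    nlinarith [norm_nonneg u]
  rw [hzX', real_inner_smul_right, norm_smul, Real.norm_of_nonneg (htpos k).le]
  nlinarith [htpos k]

theorem fnormal_tcone_subset_lnormal (hΩ : IsClosed Ω) {x y : H} (hy : y ∈ tcone Ω x) :
    fnormal (tcone Ω x) y ⊆ lnormal Ω x := by
  intro u hu
  refine mem_lnormal_of_forall_exists fun ε hε => ?_
  obtain ⟨r, hr, happrox⟩ :=
    exists_approx_normal_of_mem_fnormal_tcone hy hu (α := ε / 4) (by positivity)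
  obtain ⟨τ, ⟨hτ, hτε⟩, X, hX, hXx, hzX⟩ :=
    happrox (r * ε / 16) (by positivity) (ε / (r + ‖y‖ + 1)) (by positivity)
  obtain ⟨q, hq, hqX, u', hu', hu'u⟩ := exists_fnormal_near_of_approx_normal hΩ hX hε
    (s := r * τ / (2 * ε)) (ρ := r * τ) (β := r * ε / 16 * τ) (by positivity)
    (by field_simp; norm_num) (by field_simp; norm_num) (by simpa [mul_comm] using hzX)
  refine ⟨q, hq, u', hu', ?_, hu'u⟩
  rw [lt_div_iff₀ (by positivity)] at hτε
  have : r * τ / (2 * ε) * ε = r * τ / 2 := by field_simp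
  calc ‖q - x‖ ≤ ‖q - X‖ + ‖X - x‖ := norm_sub_le_norm_sub_add_norm_sub _ _ _
    _ ≤ ε := by nlinarith

end NormalsToTangentCone

section Penalty
variable {H : Type*} [NormedAddCommGroup H] [InnerProductSpace ℝ H]

theorem eq_zero_of_forall_inner_add_mul_norm_sq_nonneg {G : H} {a : ℝ}
    (h : ∀ d, 0 ≤ ⟪G, d⟫ + a * ‖d‖ ^ 2) : G = 0 := by
  set t := (|a| + 1)⁻¹
  have ht : 0 < t := by positivity
  have hat : a * t < 1 := by
    rw [← div_eq_mul_inv, div_lt_one (by positivity)]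
    linarith [le_abs_self a]
  have hG := h (-t • G)
  rw [real_inner_smul_right, real_inner_self_eq_norm_sq, norm_smul, Real.norm_eq_abs, abs_neg,
    abs_of_pos ht, mul_pow] at hG
  have : ‖G‖ ^ 2 ≤ 0 := by nlinarith [mul_pos ht (sub_pos.2 hat)]
  exact norm_eq_zero.1 (pow_eq_zero_iff two_ne_zero |>.1 (le_antisymm this (sq_nonneg _)))

noncomputable def penalty (v : H) (Λ : ℕ → Set H) (m : ℕ) (x : H) : ℝ :=
  ‖x‖ ^ 2 / 2 - ⟪v, x⟫ + m * ∑ i ∈ Finset.range m, infDist x (Λ i) ^ 2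

variable {v : H} {Λ : ℕ → Set H} {m : ℕ}

theorem continuous_penalty : Continuous (penalty v Λ m) := by
  unfold penalty
  fun_prop

theorem penalty_zero (h0 : ∀ i, (0 : H) ∈ Λ i) : penalty v Λ m 0 = 0 := by
  simp [penalty, infDist_zero_of_mem (h0 _)]

theorem exists_forall_penalty_le [ProperSpace H] (h0 : ∀ i, (0 : H) ∈ Λ i) :
    ∃ x₀, ∀ x, penalty v Λ m x₀ ≤ penalty v Λ m x := by
  refine continuous_penalty.exists_forall_le' 0 ?_
  filter_upwards [tendsto_norm_cocompact_atTop.eventually_ge_atTop (2 * ‖v‖)] with x hx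
  rw [penalty_zero h0, penalty]
  nlinarith [real_inner_le_norm v x, norm_nonneg v,
    mul_nonneg m.cast_nonneg (Finset.sum_nonneg fun i (_ : i ∈ Finset.range m) =>
      sq_nonneg (infDist x (Λ i)))]

/-- Replacing `infDist x (Λ i)` by `‖x - y i‖` gives a quadratic majorant of the penalty that
touches it at `x₀`, so its gradient at `x₀` vanishes. -/
theorem sub_eq_sum_of_forall_penalty_le {x₀ : H} {y : ℕ → H} (hy : ∀ i, y i ∈ Λ i)
    (hyd : ∀ i, infDist x₀ (Λ i) = dist x₀ (y i))
    (hmin : ∀ x, penalty v Λ m x₀ ≤ penalty v Λ m x) :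
    v - x₀ = ∑ i ∈ Finset.range m, (2 * m : ℝ) • (x₀ - y i) := by
  set G := x₀ - v + ∑ i ∈ Finset.range m, (2 * m : ℝ) • (x₀ - y i)
  suffices hG : G = 0 by
    rw [← sub_eq_zero, ← neg_eq_zero, ← hG, neg_sub]
    simp only [G]
    abel
  refine eq_zero_of_forall_inner_add_mul_norm_sq_nonneg (a := 1 / 2 + m * m) fun d => ?_
  have hterm : ∀ i, infDist (x₀ + d) (Λ i) ^ 2 - infDist x₀ (Λ i) ^ 2 ≤
      2 * ⟪x₀ - y i, d⟫ + ‖d‖ ^ 2 := by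
    intro i
    have hle : infDist (x₀ + d) (Λ i) ≤ ‖x₀ - y i + d‖ := by
      rw [sub_add_eq_add_sub, ← dist_eq_norm]; exact infDist_le_dist_of_mem (hy i)
    have := pow_le_pow_left₀ infDist_nonneg hle 2
    rw [norm_add_sq_real] at this
    rw [hyd i, dist_eq_norm]
    linarith
  have hsum := Finset.sum_le_sum fun i (_ : i ∈ Finset.range m) => hterm i
  rw [Finset.sum_sub_distrib, Finset.sum_add_distrib, ← Finset.mul_sum, Finset.sum_const,
    Finset.card_range, nsmul_eq_mul] at hsum
  have hGd : ⟪G, d⟫ = ⟪x₀, d⟫ - ⟪v, d⟫ + 2 * m * ∑ i ∈ Finset.range m, ⟪x₀ - y i, d⟫ := by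
    simp only [G, inner_add_left, inner_sub_left, sum_inner, real_inner_smul_left, Finset.mul_sum]
  have hx := hmin (x₀ + d)
  simp only [penalty, norm_add_sq_real, inner_add_right] at hx
  nlinarith [mul_le_mul_of_nonneg_left hsum (Nat.cast_nonneg m : (0 : ℝ) ≤ m)]

theorem exists_penalty_nonpos_sub_mem_finSums [ProperSpace H] (hcl : ∀ i, IsClosed (Λ i))
    (h0 : ∀ i, (0 : H) ∈ Λ i) (v : H) (m : ℕ) :
    ∃ x, penalty v Λ m x ≤ 0 ∧ v - x ∈ finSums fun i => ⋃ y ∈ Λ i, fnormal (Λ i) y := by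
  obtain ⟨x₀, hmin⟩ := exists_forall_penalty_le (v := v) (m := m) h0
  choose y hy hyd using fun i => (hcl i).exists_infDist_eq_dist ⟨0, h0 i⟩ x₀
  refine ⟨x₀, penalty_zero h0 ▸ hmin 0, Finset.range m, _, fun i _ => ?_,
    sub_eq_sum_of_forall_penalty_le hy hyd hmin⟩
  refine mem_iUnion₂.2 ⟨y i, hy i, smul_mem_fnormal (by positivity) ?_⟩
  refine sub_mem_fnormal_of_locally_nearest one_pos fun z hz _ => ?_
  rw [← hyd i]
  exact infDist_le_dist_of_mem hz

theorem mem_closure_finSums_of_forall_inner_nonpos [ProperSpace H] (hcl : ∀ i, IsClosed (Λ i))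
    (h0 : ∀ i, (0 : H) ∈ Λ i) (hv : ∀ w ∈ ⋂ i, Λ i, ⟪v, w⟫ ≤ 0) :
    v ∈ closure (finSums fun i => ⋃ y ∈ Λ i, fnormal (Λ i) y) := by
  choose x hpen hsum using exists_penalty_nonpos_sub_mem_finSums hcl h0 v
  have hquad : ∀ m, ‖x m‖ ^ 2 / 2 + m * ∑ i ∈ Finset.range m, infDist (x m) (Λ i) ^ 2 ≤
      ⟪v, x m⟫ := fun m => by have := hpen m; unfold penalty at this; linarith
  have hsum_nonneg : ∀ m : ℕ, 0 ≤ (m : ℝ) * ∑ i ∈ Finset.range m, infDist (x m) (Λ i) ^ 2 :=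
    fun m => mul_nonneg m.cast_nonneg (Finset.sum_nonneg fun _ _ => sq_nonneg _)
  have hnorm : ∀ m, ‖x m‖ ≤ 2 * ‖v‖ := fun m => by
    have h := (hquad m).trans (real_inner_le_norm v (x m))
    by_contra! hlt
    nlinarith [hsum_nonneg m, mul_lt_mul_of_pos_right hlt (hlt.trans_le' (by positivity))]
  have hinner : ∀ m, ⟪v, x m⟫ ≤ 2 * ‖v‖ ^ 2 := fun m => by
    nlinarith [real_inner_le_norm v (x m), hnorm m, norm_nonneg v]
  have hdist : ∀ m : ℕ, ∀ i < m, (m : ℝ) * infDist (x m) (Λ i) ^ 2 ≤ 2 * ‖v‖ ^ 2 := by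
    intro m i hi
    have := Finset.single_le_sum (fun j _ => sq_nonneg (infDist (x m) (Λ j)))
      (Finset.mem_range.2 hi)
    nlinarith [hquad m, hinner m, (m.cast_nonneg : (0 : ℝ) ≤ m), sq_nonneg ‖x m‖]
  obtain ⟨xh, -, φ, hφ, hlim⟩ := tendsto_subseq_of_bounded (x := x)
    (isBounded_closedBall (x := (0 : H)) (r := 2 * ‖v‖))
    fun m => mem_closedBall_zero_iff.2 (hnorm m)
  have hmem : ∀ i, xh ∈ Λ i := by
    intro i
    have hto0 : Tendsto (fun j => infDist (x (φ j)) (Λ i) ^ 2) atTop (𝓝 0) := by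
      refine squeeze_zero' (Eventually.of_forall fun _ => sq_nonneg _) ?_
        ((tendsto_const_div_atTop_nhds_zero_nat (2 * ‖v‖ ^ 2)).comp hφ.tendsto_atTop)
      filter_upwards [eventually_gt_atTop i] with j hj
      have hij : i < φ j := hj.trans_le (hφ.id_le j)
      rw [Function.comp_apply, le_div_iff₀' (by exact_mod_cast (Nat.zero_le i).trans_lt hij)]
      exact hdist _ _ hij
    rw [(hcl i).mem_iff_infDist_zero ⟨0, h0 i⟩, ← pow_eq_zero_iff two_ne_zero]
    exact tendsto_nhds_unique ((((continuous_infDist_pt _).tendsto xh).comp hlim).pow 2) hto0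
  have hxh : xh = 0 := by
    have hle := le_of_tendsto_of_tendsto' ((hlim.norm.pow 2).div_const 2)
      (tendsto_const_nhds.inner hlim) fun j => (le_add_of_nonneg_right (hsum_nonneg _)).trans
        (hquad (φ j))
    have := hv xh (mem_iInter.2 hmem)
    exact norm_eq_zero.1 (by nlinarith [norm_nonneg xh])
  have hv_lim : Tendsto (fun j => v - x (φ j)) atTop (𝓝 v) := by
    simpa [hxh] using tendsto_const_nhds.sub hlim
  exact mem_closure_of_tendsto hv_lim (Eventually.of_forall fun j => hsum (φ j))

end Penalty

theorem generalized_normals_to_countable_intersections_general {n : ℕ}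
    (Ω : ℕ → Set (EuclideanSpace ℝ (Fin n))) (xb : EuclideanSpace ℝ (Fin n))
    (hcl : ∀ i, IsClosed (Ω i)) (hxb : ∀ i, xb ∈ Ω i)
    (hCHIP : tcone (⋂ i, Ω i) xb = ⋂ i, tcone (Ω i) xb) :
    fnormal (⋂ i, Ω i) xb ⊆ closure (finSums fun i => lnormal (Ω i) xb) ∧
    (IsClosed (finSums fun i => lnormal (Ω i) xb) →
      fnormal (⋂ i, Ω i) xb ⊆ finSums fun i => lnormal (Ω i) xb) := by
  have hsub : fnormal (⋂ i, Ω i) xb ⊆ closure (finSums fun i => lnormal (Ω i) xb) := by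
    intro v hv
    have hpolar : ∀ w ∈ ⋂ i, tcone (Ω i) xb, ⟪v, w⟫ ≤ 0 := fun w hw =>
      inner_nonpos_of_mem_fnormal_of_mem_tcone hv (hCHIP ▸ hw)
    refine closure_mono (finSums_mono fun i => iUnion₂_subset fun y hy => ?_)
      (mem_closure_finSums_of_forall_inner_nonpos (fun _ => isClosed_tcone)
        (fun i => zero_mem_tcone (hxb i)) hpolar)
    exact fnormal_tcone_subset_lnormal (hcl i) hy
  exact ⟨hsub, fun hclosed => hclosed.closure_eq ▸ hsub⟩

/-- **Generalized normals to countable set intersections** (Theorem 3.12).  Under the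
CHIP and the normal qualification condition, every Fréchet normal to `⋂ Ωᵢ` at `x̄` is
in the closure of the set of finite sums of limiting normals to the `Ωᵢ`; under the
normal closedness condition the closure operation can be omitted. -/
theorem generalized_normals_to_countable_intersections {n : ℕ}
    (Ω : ℕ → Set (EuclideanSpace ℝ (Fin n))) (xb : EuclideanSpace ℝ (Fin n))
    (hcl : ∀ i, IsClosed (Ω i)) (hxb : ∀ i, xb ∈ Ω i)
    (hCHIP : tcone (⋂ i, Ω i) xb = ⋂ i, tcone (Ω i) xb)
    (hNQC : ∀ xs : ℕ → EuclideanSpace ℝ (Fin n),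
      (∀ i, xs i ∈ lnormal (Ω i) xb) →
      Tendsto (fun m => ∑ i ∈ Finset.range m, xs i) atTop (nhds 0) →
      ∀ i, xs i = 0) :
    fnormal (⋂ i, Ω i) xb ⊆ closure (finSums fun i => lnormal (Ω i) xb) ∧
    (IsClosed (finSums fun i => lnormal (Ω i) xb) →
      fnormal (⋂ i, Ω i) xb ⊆ finSums fun i => lnormal (Ω i) xb) :=
  generalized_normals_to_countable_intersections_general Ω xb hcl hxb hCHIP
end
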